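/- Let a, b be positive semidefinite n×n complex matrices. Then a * b = b * a (where a * b = (b^{1/2} a b^{1/2})^{1/2}) if and only if a b = b a. -/

import Mathlib

open ComplexOrder Matrix

variable {n : Type*} [Fintype n] [DecidableEq n]

open scoped Classical in
/-- The positive semidefinite square root (junk value `0` if the input is not PSD). -/
noncomputable def psqrt (A : Matrix n n ℂ) : Matrix n n ℂ :=
  if h : A.PosSemidef then
    (h.1.eigenvectorUnitary : Matrix n n ℂ) *
      diagonal (fun i => ((Real.sqrt (h.1.eigenvalues i) : ℝ) : ℂ)) *
      (star h.1.eigenvectorUnitary : Matrix n n ℂ)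
  else 0

namespace Matrix.PosSemidef

/-- Port helper: the old `PosSemidef.sqrt`. -/
noncomputable def sqrt {A : Matrix n n ℂ} (hA : A.PosSemidef) : Matrix n n ℂ :=
  (hA.1.eigenvectorUnitary : Matrix n n ℂ) * diagonal ((↑) ∘ Real.sqrt ∘ hA.1.eigenvalues) *
    (star hA.1.eigenvectorUnitary : Matrix n n ℂ)

open scoped MatrixOrder in
lemma sqrt_eq_cfcSqrt {A : Matrix n n ℂ} (hA : A.PosSemidef) : hA.sqrt = CFC.sqrt A := by
  rw [CFC.sqrt_eq_cfc, cfc_nnreal_eq_real _ A, hA.1.cfc_eq]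
  simp only [IsHermitian.cfc, sqrt, Unitary.conjStarAlgAut_apply]
  congr 3
  funext i
  simp [hA.eigenvalues_nonneg i]

open scoped MatrixOrder in
lemma posSemidef_sqrt {A : Matrix n n ℂ} (hA : A.PosSemidef) : hA.sqrt.PosSemidef := by
  rw [sqrt_eq_cfcSqrt]; exact (CFC.sqrt_nonneg A).posSemidef

open scoped MatrixOrder in
lemma sqrt_mul_self {A : Matrix n n ℂ} (hA : A.PosSemidef) : hA.sqrt * hA.sqrt = A := by
  rw [sqrt_eq_cfcSqrt]; exact CFC.sqrt_mul_sqrt_self A hA.nonneg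

open scoped MatrixOrder in
lemma sq_sqrt {A : Matrix n n ℂ} (hA : A.PosSemidef) : hA.sqrt ^ 2 = A := by
  rw [sqrt_eq_cfcSqrt]; exact CFC.sq_sqrt A hA.nonneg

open scoped MatrixOrder in
lemma eq_of_sq_eq_sq {A B : Matrix n n ℂ} (hA : A.PosSemidef) (hB : B.PosSemidef)
    (hAB : A ^ 2 = B ^ 2) : A = B := by
  rw [← CFC.sqrt_sq A hA.nonneg, hAB, CFC.sqrt_sq B hB.nonneg]

end Matrix.PosSemidef

set_option linter.unusedSectionVars false in
/-- Key combinatorial lemma: if `d` is a nonnegative weight and `c` is a nonnegative symmetric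
"matrix" satisfying the diagonal relations, then `c` vanishes off the level sets of `d`. -/
lemma key_aux (d : n → ℝ) (hd : ∀ i, 0 ≤ d i) (c : n → n → ℝ)
    (hc : ∀ i k, 0 ≤ c i k) (hsymm : ∀ i k, c i k = c k i)
    (hyp : ∀ i, ∑ k, ((d k) ^ 2 - (d i) ^ 2) * c i k = 0) :
    ∀ i k, d i ≠ d k → c i k = 0 := by
  suffices H : ∀ N : ℕ, ∀ i, (Finset.univ.filter (fun j => d i < d j)).card ≤ N →
      ∀ k, d i ≠ d k → c i k = 0 by
    intro i k hik
    exact H _ i le_rfl k hik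
  intro N
  induction N with
  | zero =>
    intro i hcard k hik
    have hle : ∀ j, d j ≤ d i := by
      intro j
      by_contra hj
      push_neg at hj
      have : j ∈ Finset.univ.filter (fun j => d i < d j) := by simp [hj]
      have := Finset.card_pos.mpr ⟨j, this⟩
      omega
    have hterms : ∀ j ∈ Finset.univ, ((d j) ^ 2 - (d i) ^ 2) * c i j ≤ 0 := by
      intro j _
      apply mul_nonpos_of_nonpos_of_nonneg _ (hc i j)
      have := hle j
      nlinarith [hd j, hd i]
    have := (Finset.sum_eq_zero_iff_of_nonpos hterms).mp (hyp i) k (Finset.mem_univ k)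
    have hlt : d k < d i := lt_of_le_of_ne (hle k) (Ne.symm hik)
    have hne : (d k) ^ 2 - (d i) ^ 2 ≠ 0 := by nlinarith [hd k, hd i]
    exact (mul_eq_zero.mp this).resolve_left hne
  | succ N ih =>
    intro i hcard k hik
    have hbig : ∀ j, d i < d j → c i j = 0 := by
      intro j hj
      have hsub : (Finset.univ.filter (fun m => d j < d m)) ⊂
          (Finset.univ.filter (fun m => d i < d m)) := by
        constructor
        · intro m hm
          simp only [Finset.mem_filter, Finset.mem_univ, true_and] at hm ⊢
          exact hj.trans hm
        · intro hsub'
          have hjmem : j ∈ Finset.univ.filter (fun m => d i < d m) := by simp [hj]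
          have := hsub' hjmem
          simp at this
      have hlt' : (Finset.univ.filter (fun m => d j < d m)).card ≤ N := by
        have := Finset.card_lt_card hsub
        omega
      rw [hsymm]
      exact ih j hlt' i (fun h => absurd h.symm (ne_of_lt hj))
    have hterms : ∀ j ∈ Finset.univ, ((d j) ^ 2 - (d i) ^ 2) * c i j ≤ 0 := by
      intro j _
      rcases lt_trichotomy (d j) (d i) with h | h | h
      · apply mul_nonpos_of_nonpos_of_nonneg _ (hc i j)
        nlinarith [hd j, hd i]
      · simp [h]
      · rw [hbig j h, mul_zero]
    have := (Finset.sum_eq_zero_iff_of_nonpos hterms).mp (hyp i) k (Finset.mem_univ k)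
    rcases lt_trichotomy (d k) (d i) with h | h | h
    · have hne : (d k) ^ 2 - (d i) ^ 2 ≠ 0 := by nlinarith [hd k, hd i]
      exact (mul_eq_zero.mp this).resolve_left hne
    · exact absurd h.symm hik
    · exact hbig k h

/-- If `Y` commutes with `diagonal d` then it commutes with `diagonal e` whenever `e`
is constant on the level sets of `d`. -/
lemma comm_diagonal {d e : n → ℂ} (h : ∀ i j, d i = d j → e i = e j) {Y : Matrix n n ℂ}
    (hY : Y * diagonal d = diagonal d * Y) : Y * diagonal e = diagonal e * Y := by
  ext i j
  have h1 : Y i j * d j = d i * Y i j := by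
    have := congrFun (congrFun hY i) j
    simpa [mul_diagonal, diagonal_mul] using this
  simp only [mul_diagonal, diagonal_mul]
  by_cases hij : d i = d j
  · rw [h i j hij, mul_comm]
  · have h2 : Y i j * (d j - d i) = 0 := by linear_combination h1
    rcases mul_eq_zero.mp h2 with h3 | h3
    · simp [h3]
    · exact absurd (by linear_combination h3) (Ne.symm hij)

/-- Anything commuting with a PSD matrix commutes with its square root. -/
lemma commute_sqrt {A X : Matrix n n ℂ} (hA : A.PosSemidef) (h : Commute X A) :
    Commute X hA.sqrt := by
  have h1 := hA.1
  set V : Matrix n n ℂ := (h1.eigenvectorUnitary : Matrix n n ℂ) with hV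
  have hV1 : V * star V = 1 := (mem_unitaryGroup_iff).mp h1.eigenvectorUnitary.2
  have hV2 : star V * V = 1 := (mem_unitaryGroup_iff').mp h1.eigenvectorUnitary.2
  have hspec : A = V * diagonal (RCLike.ofReal ∘ h1.eigenvalues) * star V :=
    h1.spectral_theorem
  have hsq : hA.sqrt = V * diagonal ((↑) ∘ Real.sqrt ∘ h1.eigenvalues) * star V := rfl
  set Y := star V * X * V with hY
  have hcomm : Y * diagonal (RCLike.ofReal ∘ h1.eigenvalues) =
      diagonal (RCLike.ofReal ∘ h1.eigenvalues) * Y := by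
    have h' : X * A = A * X := h
    rw [hspec] at h'
    calc Y * diagonal (RCLike.ofReal ∘ h1.eigenvalues)
        = star V * (X * (V * diagonal (RCLike.ofReal ∘ h1.eigenvalues) * star V)) * V := by
          simp only [hY, Matrix.mul_assoc]
          rw [hV2, Matrix.mul_one]
      _ = star V * ((V * diagonal (RCLike.ofReal ∘ h1.eigenvalues) * star V) * X) * V := by
          rw [h']
      _ = diagonal (RCLike.ofReal ∘ h1.eigenvalues) * Y := by
          simp only [hY, Matrix.mul_assoc]
          rw [← Matrix.mul_assoc (star V) V _, hV2, Matrix.one_mul]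
  have hcomm2 : Y * diagonal ((↑) ∘ Real.sqrt ∘ h1.eigenvalues) =
      diagonal ((↑) ∘ Real.sqrt ∘ h1.eigenvalues) * Y := by
    apply comm_diagonal _ hcomm
    intro i j hij
    simp only [Function.comp] at hij ⊢
    norm_cast at hij ⊢
    rw [hij]
  show X * hA.sqrt = hA.sqrt * X
  rw [hsq]
  have hX : X = V * Y * star V := by
    simp only [hY, Matrix.mul_assoc]
    rw [← Matrix.mul_assoc V (star V) _, hV1, Matrix.one_mul, Matrix.mul_one]
  calc X * (V * diagonal ((↑) ∘ Real.sqrt ∘ h1.eigenvalues) * star V)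
      = V * (Y * diagonal ((↑) ∘ Real.sqrt ∘ h1.eigenvalues)) * star V := by
        rw [hX]
        simp only [Matrix.mul_assoc]
        rw [← Matrix.mul_assoc (star V) V _, hV2, Matrix.one_mul]
    _ = V * (diagonal ((↑) ∘ Real.sqrt ∘ h1.eigenvalues) * Y) * star V := by rw [hcomm2]
    _ = (V * diagonal ((↑) ∘ Real.sqrt ∘ h1.eigenvalues) * star V) * X := by
        rw [hX]
        simp only [Matrix.mul_assoc]
        rw [← Matrix.mul_assoc (star V) V _, hV2, Matrix.one_mul]

set_option linter.unusedSectionVars false in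
/-- Diagonal entry computation. -/
lemma diag_entry_eq {A : Matrix n n ℂ} (hA : A.IsHermitian) (e : n → ℂ)
    (hm : diagonal e * (A * A) * diagonal e = A * (diagonal e * diagonal e) * A) (i : n) :
    e i * e i * ∑ k, (Complex.normSq (A i k) : ℂ) =
      ∑ k, e k * e k * (Complex.normSq (A i k) : ℂ) := by
  have h := congrFun (congrFun hm i) i
  have hki : ∀ k, A k i = star (A i k) := by
    intro k
    conv_lhs => rw [← hA.eq]
    rfl
  simp only [Matrix.mul_apply, Matrix.diagonal_apply, ite_mul, mul_ite, zero_mul, mul_zero,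
    Finset.sum_ite_eq, Finset.sum_ite_eq', Finset.mem_univ, if_true] at h
  simp only [hki] at h
  have hob : ∀ x, A i x * star (A i x) = (Complex.normSq (A i x) : ℂ) :=
    fun x => Complex.mul_conj _
  calc e i * e i * ∑ k, (Complex.normSq (A i k) : ℂ)
      = (e i * ∑ j, A i j * star (A i j)) * e i := by simp only [hob]; ring
    _ = ∑ x, A i x * (e x * e x) * star (A i x) := h
    _ = ∑ k, e k * e k * (Complex.normSq (A i k) : ℂ) := by
        refine Finset.sum_congr rfl fun k _ => ?_
        rw [show A i k * (e k * e k) * star (A i k)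
            = e k * e k * (A i k * star (A i k)) by ring, hob k]

/-- The quantum fidelity product `a * b = (b^(1/2) a b^(1/2))^(1/2)`. -/
noncomputable def fid (a b : Matrix n n ℂ) : Matrix n n ℂ :=
  psqrt (psqrt b * a * psqrt b)

set_option maxHeartbeats 1000000

theorem stmt11 (a b : Matrix n n ℂ) (ha : a.PosSemidef) (hb : b.PosSemidef) :
    fid a b = fid b a ↔ a * b = b * a := by
  classical
  have hpa : psqrt a = ha.sqrt := dif_pos ha
  have hpb : psqrt b = hb.sqrt := dif_pos hb
  set s : Matrix n n ℂ := ha.sqrt with hs'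
  set t : Matrix n n ℂ := hb.sqrt with ht'
  have hsP : s.PosSemidef := ha.posSemidef_sqrt
  have htP : t.PosSemidef := hb.posSemidef_sqrt
  have hss : s * s = a := ha.sqrt_mul_self
  have htt : t * t = b := hb.sqrt_mul_self
  have hXP : (t * a * t).PosSemidef := by
    have := ha.mul_mul_conjTranspose_same t
    rwa [htP.1.eq] at this
  have hYP : (s * b * s).PosSemidef := by
    have := hb.mul_mul_conjTranspose_same s
    rwa [hsP.1.eq] at this
  have hfab : fid a b = hXP.sqrt := by rw [fid, hpb]; exact dif_pos hXP
  have hfba : fid b a = hYP.sqrt := by rw [fid, hpa]; exact dif_pos hYP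
  constructor
  · intro h
    have heq : t * (s * s) * t = s * (t * t) * s := by
      rw [hss, htt]
      calc t * a * t = hXP.sqrt * hXP.sqrt := hXP.sqrt_mul_self.symm
        _ = hYP.sqrt * hYP.sqrt := by rw [← hfab, h, hfba]
        _ = s * b * s := hYP.sqrt_mul_self
    -- spectral decomposition of t
    have h1 : t.IsHermitian := htP.1
    set V : Matrix n n ℂ := (h1.eigenvectorUnitary : Matrix n n ℂ) with hV
    have hV1 : V * star V = 1 := (mem_unitaryGroup_iff).mp h1.eigenvectorUnitary.2
    have hV2 : star V * V = 1 := (mem_unitaryGroup_iff').mp h1.eigenvectorUnitary.2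
    set d : n → ℝ := h1.eigenvalues with hd
    set e : n → ℂ := RCLike.ofReal ∘ d with he
    have hspec : t = V * diagonal e * star V := h1.spectral_theorem
    set A : Matrix n n ℂ := star V * s * V with hA
    have hAH : A.IsHermitian := by
      show Aᴴ = A
      rw [hA]
      simp only [Matrix.star_eq_conjTranspose, conjTranspose_mul, conjTranspose_conjTranspose,
        hsP.1.eq, Matrix.mul_assoc]
    have keyc : ∀ M N : Matrix n n ℂ,
        star V * (M * N) * V = (star V * M * V) * (star V * N * V) := by
      intro M N
      rw [show (star V * M * V) * (star V * N * V)
          = star V * (M * ((V * star V) * (N * V))) by simp only [Matrix.mul_assoc],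
        hV1, Matrix.one_mul,
        show star V * (M * (N * V)) = star V * (M * N) * V by simp only [Matrix.mul_assoc]]
    have hDV : star V * t * V = diagonal e := by
      rw [hspec]
      simp only [Matrix.mul_assoc]
      rw [hV2, Matrix.mul_one, ← Matrix.mul_assoc, hV2, Matrix.one_mul]
    have hm : diagonal e * (A * A) * diagonal e = A * (diagonal e * diagonal e) * A := by
      have hcg : star V * (t * (s * s) * t) * V = star V * (s * (t * t) * s) * V := by
        rw [heq]
      rw [show t * (s * s) * t = (t * (s * s)) * t from rfl, keyc (t * (s * s)) t,
        keyc t (s * s), keyc s s, hDV,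
        show s * (t * t) * s = (s * (t * t)) * s from rfl, keyc (s * (t * t)) s,
        keyc s (t * t), keyc t t, hDV, ← hA] at hcg
      exact hcg
    have hdiag := diag_entry_eq hAH e hm
    set c : n → n → ℝ := fun i k => Complex.normSq (A i k) with hc
    have hR : ∀ i, ∑ k, ((d k) ^ 2 - (d i) ^ 2) * c i k = 0 := by
      intro i
      have hC : ∑ k, ((e k * e k - e i * e i) * (c i k : ℂ)) = 0 := by
        simp only [sub_mul]
        rw [Finset.sum_sub_distrib, ← Finset.mul_sum, ← hdiag i, sub_self]
      have hC2 : ((∑ k, ((d k) ^ 2 - (d i) ^ 2) * c i k : ℝ) : ℂ) = 0 := by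
        rw [← hC]
        push_cast
        refine Finset.sum_congr rfl fun k _ => ?_
        have hek : e k = ((d k : ℝ) : ℂ) := rfl
        have hei : e i = ((d i : ℝ) : ℂ) := rfl
        rw [hek, hei]
        ring
      exact_mod_cast hC2
    have hzero : ∀ i k, d i ≠ d k → c i k = 0 :=
      key_aux d (fun i => htP.eigenvalues_nonneg i) c
        (fun i k => Complex.normSq_nonneg _)
        (fun i k => by
          have : A k i = star (A i k) := by
            conv_lhs => rw [← hAH.eq]
            rfl
          simp [hc, this, Complex.normSq_conj])
        hR
    have hAD : A * diagonal e = diagonal e * A := by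
      ext i j
      simp only [mul_diagonal, diagonal_mul]
      by_cases hij : d i = d j
      · have : e i = e j := by simp [he, hij]
        rw [this, mul_comm]
      · have hz : A i j = 0 := Complex.normSq_eq_zero.mp (hzero i j hij)
        simp [hz]
    have hsA : s = V * A * star V := by
      rw [hA]
      simp only [Matrix.mul_assoc]
      rw [← Matrix.mul_assoc V (star V) _, hV1, Matrix.one_mul, Matrix.mul_one]
    have hst : Commute s t := by
      show s * t = t * s
      rw [hsA, hspec]
      calc (V * A * star V) * (V * diagonal e * star V)
          = V * (A * ((star V * V) * (diagonal e * star V))) := by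
            simp only [Matrix.mul_assoc]
        _ = V * (A * diagonal e) * star V := by
            rw [hV2, Matrix.one_mul]; simp only [Matrix.mul_assoc]
        _ = V * (diagonal e * A) * star V := by rw [hAD]
        _ = (V * diagonal e * star V) * (V * A * star V) := by
            rw [show (V * diagonal e * star V) * (V * A * star V)
              = V * (diagonal e * ((star V * V) * (A * star V))) by simp only [Matrix.mul_assoc],
              hV2, Matrix.one_mul]
            simp only [Matrix.mul_assoc]
    rw [← hss, ← htt]
    exact ((hst.mul_left hst).mul_right (hst.mul_left hst)).eq
  · intro h
    have hab : Commute a b := h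
    have hc1 : Commute b s := commute_sqrt ha hab.symm
    have hst : Commute s t := commute_sqrt hb hc1.symm
    have hXY : t * a * t = s * b * s := by
      rw [← hss, ← htt]
      calc t * (s * s) * t = t * t * (s * s) := by
            rw [Matrix.mul_assoc, (hst.mul_left hst).eq, ← Matrix.mul_assoc]
        _ = (s * s) * (t * t) :=
            (((hst.mul_left hst).mul_right (hst.mul_left hst)).eq).symm
        _ = s * (t * t) * s :=
            (by rw [Matrix.mul_assoc, (hst.symm.mul_left hst.symm).eq, ← Matrix.mul_assoc] :
              s * (t * t) * s = (s * s) * (t * t)).symm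
    refine hfab.trans (Eq.trans ?_ hfba.symm)
    exact hXP.posSemidef_sqrt.eq_of_sq_eq_sq hYP.posSemidef_sqrt
      (by rw [hXP.sq_sqrt, hYP.sq_sqrt, hXY])
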